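/- arXiv:1209.5456 — 6 statements merged into one kernel-verified Lean document; each statement's English description precedes it below -/
import Mathlib

section
/- Let R be a binary relation on a finite set U and M(R) the successor relation matroid. For X ⊆ U, X is a closed set of M(R) (i.e., cl_{M(R)}(X) = X) if and only if for all x ∈ X and all u ∈ U \ X, RS_R(x) ≠ RS_R(u). -/
def RS {α : Type*} (R : α → α → Prop) (x : α) : Set α := {y | R x y}

def IndepS {α : Type*} (R : α → α → Prop) : Set (Set α) :=
  {X | ∀ x ∈ X, ∀ y ∈ X, x ≠ y → RS R x ≠ RS R y}

noncomputable def rankS {α : Type*} (R : α → α → Prop) (X : Set α) : ℕ :=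
  sSup {n : ℕ | ∃ I, I ⊆ X ∧ I ∈ IndepS R ∧ I.ncard = n}

noncomputable def clS {α : Type*} (R : α → α → Prop) (X : Set α) : Set α :=
  {u | rankS R (insert u X) = rankS R X}

/-! Independence means that `RS R` is injective, so the rank of `X` counts the distinct
successor sets `RS R x`, `x ∈ X`. Adding `u` to `X` keeps the rank iff `RS R u` is already
among them; hence `X` is closed iff no `u ∉ X` shares its successor set with a point of `X`. -/

section SuccessorRelationMatroid

variable {α : Type*} (R : α → α → Prop)

theorem mem_indepS_iff_injOn {I : Set α} : I ∈ IndepS R ↔ Set.InjOn (RS R) I := by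
  refine ⟨fun hI a ha b hb hab => ?_, fun hI a ha b hb hne hab => hne (hI ha hb hab)⟩
  by_contra hne
  exact hI a ha b hb hne hab

theorem rankS_eq_ncard_image {X : Set α} (hX : (RS R '' X).Finite) :
    rankS R X = (RS R '' X).ncard := by
  have hbound : (RS R '' X).ncard ∈ upperBounds {n | ∃ I, I ⊆ X ∧ I ∈ IndepS R ∧ I.ncard = n} := by
    rintro n ⟨I, hIX, hI, rfl⟩
    rw [← ((mem_indepS_iff_injOn R).1 hI).ncard_image]
    exact Set.ncard_le_ncard (Set.image_mono hIX) hX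
  obtain ⟨I, hIX, hbij⟩ := Set.exists_subset_bijOn X (RS R)
  refine le_antisymm (csSup_le ⟨0, ∅, Set.empty_subset X, by simp [IndepS]⟩ hbound)
    (le_csSup ⟨_, hbound⟩ ⟨I, hIX, (mem_indepS_iff_injOn R).2 hbij.injOn, ?_⟩)
  rw [← hbij.injOn.ncard_image, hbij.image_eq]

theorem mem_clS_iff {X : Set α} {u : α} (hX : (RS R '' X).Finite) :
    u ∈ clS R X ↔ RS R u ∈ RS R '' X := by
  have hXu : (RS R '' insert u X).Finite := by
    rw [Set.image_insert_eq]
    exact hX.insert _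
  simp only [clS, Set.mem_ofPred_eq, rankS_eq_ncard_image R hXu, rankS_eq_ncard_image R hX,
    Set.image_insert_eq]
  by_cases hu : RS R u ∈ RS R '' X
  · simp only [Set.ncard_insert_of_mem hu, hu]
  · simp only [Set.ncard_insert_of_notMem hu hX, hu, iff_false]
    omega

end SuccessorRelationMatroid

theorem stmt_8 {α : Type*} [Fintype α] (R : α → α → Prop) (X : Set α) :
    clS R X = X ↔ ∀ x ∈ X, ∀ u ∉ X, RS R x ≠ RS R u := by
  have hcl : ∀ u, u ∈ clS R X ↔ RS R u ∈ RS R '' X := fun u => mem_clS_iff R (Set.toFinite _)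
  have hsub : X ⊆ clS R X := fun u hu => (hcl u).2 ⟨u, hu, rfl⟩
  rw [Set.Subset.antisymm_iff, and_iff_left hsub]
  constructor
  · rintro hclosed x hx u hu hxu
    exact hu (hclosed ((hcl u).2 ⟨x, hx, hxu⟩))
  · rintro h u hu
    obtain ⟨x, hx, hxu⟩ := (hcl u).1 hu
    by_contra hu'
    exact h x hx u hu' hxu
end

section
/- Let R₁ and R₂ be binary relations on a finite set U, inducing successor relation matroids M(R₁) and M(R₂). Then M(R₁) = M(R₂) (i.e., I(R₁) = I(R₂)) if and only if for all x, y ∈ U: RS_{R₁}(x) = RS_{R₁}(y) ⟺ RS_{R₂}(x) = RS_{R₂}(y). -/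
lemma aux {α : Type*} (R₁ R₂ : α → α → Prop) (h : IndepS R₁ = IndepS R₂)
    {x y : α} (hxy : RS R₁ x = RS R₁ y) : RS R₂ x = RS R₂ y := by
  by_cases hne : x = y
  · subst hne; rfl
  · by_contra hc
    have hmem : ({x, y} : Set α) ∈ IndepS R₂ := by
      intro a ha b hb hab
      rcases ha with rfl | rfl <;> rcases hb with rfl | rfl <;>
        first
        | exact absurd rfl hab
        | exact hc
        | exact fun e => hc e.symm
    rw [← h] at hmem
    exact hmem x (Or.inl rfl) y (Or.inr rfl) hne hxy

theorem stmt_9 {α : Type*} [Fintype α] (R₁ R₂ : α → α → Prop) :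
    IndepS R₁ = IndepS R₂ ↔
      ∀ x y : α, (RS R₁ x = RS R₁ y ↔ RS R₂ x = RS R₂ y) := by
  constructor
  · intro h x y
    exact ⟨aux R₁ R₂ h, aux R₂ R₁ h.symm⟩
  · intro h
    ext X
    constructor <;> intro hX a ha b hb hab hRS
    · exact hX a ha b hb hab ((h a b).mpr hRS)
    · exact hX a ha b hb hab ((h a b).mp hRS)
end

section
/- Let M be a matroid on a finite set U and R(M) the relation induced by M (x R(M) y iff x = y or {x,y} is a circuit of M). Then for every x ∈ U, H_{R(M)}({x}) ⊆ cl_M({x}), where H_{R(M)} is the upper approximation operator of R(M) and cl_M the closure operator of M. -/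
/-- Circuits: minimal dependent sets of a matroid given by its independent sets. -/
def Circ {α : Type*} (Indep : Set (Set α)) : Set (Set α) :=
  {C | C ∉ Indep ∧ ∀ Y ⊆ C, Y ∉ Indep → Y = C}

/-- The relation induced by a matroid: `x R(M) y` iff `x = y` or `{x, y}` is a circuit. -/
def relM {α : Type*} (Indep : Set (Set α)) : α → α → Prop :=
  fun x y => x = y ∨ ({x, y} : Set α) ∈ Circ Indep

/-- The rank function of a matroid given by its independent sets. -/
noncomputable def rankM {α : Type*} (Indep : Set (Set α)) (X : Set α) : ℕ :=
  sSup {n : ℕ | ∃ I, I ⊆ X ∧ I ∈ Indep ∧ I.ncard = n}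

/-- The closure operator of a matroid given by its independent sets. -/
noncomputable def clM {α : Type*} (Indep : Set (Set α)) (X : Set α) : Set α :=
  {u | rankM Indep (insert u X) = rankM Indep X}

def upper {α : Type*} (R : α → α → Prop) (X : Set α) : Set α :=
  {x | (RS R x ∩ X).Nonempty}

theorem stmt_16 {α : Type*} [Fintype α] (Indep : Set (Set α))
(h1 : ∅ ∈ Indep)
    (h2 : ∀ I ∈ Indep, ∀ I' ⊆ I, I' ∈ Indep)
    (h3 : ∀ I₁ ∈ Indep, ∀ I₂ ∈ Indep, I₁.ncard < I₂.ncard →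
      ∃ u ∈ I₂ \ I₁, insert u I₁ ∈ Indep) (x : α) :
    upper (relM Indep) {x} ⊆ clM Indep {x} := by
  intro u hu
  obtain ⟨z, hz, hzx⟩ := hu
  have hzx' : z = x := hzx
  subst z
  rcases hz with rfl | hcirc
  · simp [clM]
  by_cases hux : u = x
  · subst hux; simp [clM]
  -- {u, x} is a circuit, u ≠ x
  obtain ⟨hdep, hmin⟩ := hcirc
  have hxI : ({x} : Set α) ∈ Indep := by
    by_contra h
    have := hmin {x} (by simp) h
    exact hux (by
      have : u ∈ ({x} : Set α) := this ▸ (by simp : u ∈ ({u, x} : Set α))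
      simpa using this)
  have hone : (1 : ℕ) ∈ {n : ℕ | ∃ I, I ⊆ ({x} : Set α) ∧ I ∈ Indep ∧ I.ncard = n} :=
    ⟨{x}, subset_rfl, hxI, Set.ncard_singleton x⟩
  have hone' : (1 : ℕ) ∈ {n : ℕ | ∃ I, I ⊆ ({u, x} : Set α) ∧ I ∈ Indep ∧ I.ncard = n} :=
    ⟨{x}, by simp, hxI, Set.ncard_singleton x⟩
  have hr1 : rankM Indep ({x} : Set α) = 1 := by
    apply le_antisymm
    · apply csSup_le ⟨1, hone⟩
      rintro n ⟨I, hI, -, rfl⟩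
      calc I.ncard ≤ ({x} : Set α).ncard := Set.ncard_le_ncard hI (Set.toFinite _)
        _ = 1 := Set.ncard_singleton x
    · exact le_csSup ((Set.finite_Iic 1).subset (by
        rintro n ⟨I, hI, -, rfl⟩
        calc I.ncard ≤ ({x} : Set α).ncard := Set.ncard_le_ncard hI (Set.toFinite _)
          _ = 1 := Set.ncard_singleton x)).bddAbove hone
  have hcard2 : ({u, x} : Set α).ncard = 2 := Set.ncard_pair hux
  have hbd : ∀ n ∈ {n : ℕ | ∃ I, I ⊆ ({u, x} : Set α) ∧ I ∈ Indep ∧ I.ncard = n}, n ≤ 1 := by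
    rintro n ⟨I, hI, hIind, rfl⟩
    by_contra h
    push_neg at h
    have hle : ({u, x} : Set α).ncard ≤ I.ncard := by
      have : I.ncard ≤ 2 := hcard2 ▸ Set.ncard_le_ncard hI (Set.toFinite _)
      omega
    have := Set.eq_of_subset_of_ncard_le hI hle (Set.toFinite _)
    exact hdep (this ▸ hIind)
  have hr2 : rankM Indep ({u, x} : Set α) = 1 := by
    apply le_antisymm
    · exact csSup_le ⟨1, hone'⟩ hbd
    · exact le_csSup ((Set.finite_Iic 1).subset hbd).bddAbove hone'
  show rankM Indep (insert u {x}) = rankM Indep {x}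
  rw [hr1]
  simpa using hr2
end

section
/- Let M be a matroid on a finite set U and R(M) the relation induced by M. Then for every x ∈ U, cl_M({x}) = H_{R(M)}({x}) ∪ {y ∈ U : {y} is a circuit of M}. -/
lemma rank_eq_aux {α : Type*} [Fintype α] (Indep : Set (Set α)) (X : Set α) (n : ℕ)
    (hmem : ∃ I, I ⊆ X ∧ I ∈ Indep ∧ I.ncard = n)
    (hub : ∀ I, I ⊆ X → I ∈ Indep → I.ncard ≤ n) : rankM Indep X = n := by
  apply le_antisymm
  · apply csSup_le ⟨n, hmem⟩
    rintro m ⟨I, hI, hIi, rfl⟩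
    exact hub I hI hIi
  · apply le_csSup ⟨X.ncard, ?_⟩ hmem
    rintro m ⟨I, hI, hIi, rfl⟩
    exact Set.ncard_le_ncard hI X.toFinite

lemma rank_singleton_indep {α : Type*} [Fintype α] (Indep : Set (Set α)) {x : α}
    (h : ({x} : Set α) ∈ Indep) : rankM Indep {x} = 1 := by
  apply rank_eq_aux Indep _ 1 ⟨{x}, le_refl _, h, Set.ncard_singleton x⟩
  intro I hI _
  calc I.ncard ≤ ({x} : Set α).ncard := Set.ncard_le_ncard hI (Set.finite_singleton x)
    _ = 1 := Set.ncard_singleton x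

lemma rank_singleton_dep {α : Type*} [Fintype α] (Indep : Set (Set α)) (h1 : ∅ ∈ Indep) {x : α}
    (h : ({x} : Set α) ∉ Indep) : rankM Indep {x} = 0 := by
  apply rank_eq_aux Indep _ 0 ⟨∅, Set.empty_subset _, h1, Set.ncard_empty α⟩
  intro I hI hIi
  rcases Set.subset_singleton_iff_eq.mp hI with rfl | rfl
  · simp
  · exact absurd hIi h

lemma rank_pair_indep {α : Type*} [Fintype α] (Indep : Set (Set α)) {u x : α} (hne : u ≠ x)
    (h : ({u, x} : Set α) ∈ Indep) : rankM Indep {u, x} = 2 := by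
  apply rank_eq_aux Indep _ 2 ⟨{u, x}, le_refl _, h, Set.ncard_pair hne⟩
  intro I hI _
  calc I.ncard ≤ ({u, x} : Set α).ncard := Set.ncard_le_ncard hI (Set.toFinite _)
    _ = 2 := Set.ncard_pair hne

lemma rank_pair_one {α : Type*} [Fintype α] (Indep : Set (Set α)) {u x : α} (hne : u ≠ x)
    (hdep : ({u, x} : Set α) ∉ Indep) {s : α} (hs : s = u ∨ s = x)
    (hsi : ({s} : Set α) ∈ Indep) : rankM Indep {u, x} = 1 := by
  have hsub : ({s} : Set α) ⊆ {u, x} := by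
    rcases hs with rfl | rfl
    · exact Set.singleton_subset_iff.mpr (Or.inl rfl)
    · exact Set.singleton_subset_iff.mpr (Or.inr rfl)
  apply rank_eq_aux Indep _ 1 ⟨{s}, hsub, hsi, Set.ncard_singleton s⟩
  intro I hI hIi
  by_contra hgt
  push_neg at hgt
  have hle : I.ncard ≤ 2 := by
    calc I.ncard ≤ ({u, x} : Set α).ncard := Set.ncard_le_ncard hI (Set.toFinite _)
      _ = 2 := Set.ncard_pair hne
  have h2 : I.ncard = 2 := le_antisymm hle hgt
  have : I = ({u, x} : Set α) := by
    apply Set.eq_of_subset_of_ncard_le hI _ (Set.toFinite _)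
    rw [h2, Set.ncard_pair hne]
  exact hdep (this ▸ hIi)

lemma rank_pair_zero {α : Type*} [Fintype α] (Indep : Set (Set α)) (h1 : ∅ ∈ Indep)
    (h2 : ∀ I ∈ Indep, ∀ I' ⊆ I, I' ∈ Indep) {u x : α}
    (hu : ({u} : Set α) ∉ Indep) (hx : ({x} : Set α) ∉ Indep) :
    rankM Indep {u, x} = 0 := by
  apply rank_eq_aux Indep _ 0 ⟨∅, Set.empty_subset _, h1, Set.ncard_empty α⟩
  intro I hI hIi
  have : I = ∅ := by
    ext a
    simp only [Set.mem_empty_iff_false, iff_false]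
    intro ha
    have hsub : ({a} : Set α) ∈ Indep := h2 I hIi {a} (Set.singleton_subset_iff.mpr ha)
    rcases hI ha with rfl | rfl
    · exact hu hsub
    · exact hx hsub
  simp [this]

lemma circ_singleton_iff {α : Type*} (Indep : Set (Set α)) (h1 : ∅ ∈ Indep) (y : α) :
    ({y} : Set α) ∈ Circ Indep ↔ ({y} : Set α) ∉ Indep := by
  constructor
  · exact fun h => h.1
  · intro h
    refine ⟨h, fun Y hY hYn => ?_⟩
    rcases Set.subset_singleton_iff_eq.mp hY with rfl | rfl
    · exact absurd h1 hYn
    · rfl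

lemma circ_pair_iff {α : Type*} (Indep : Set (Set α)) (h1 : ∅ ∈ Indep) {u x : α} (hne : u ≠ x) :
    ({u, x} : Set α) ∈ Circ Indep ↔
      ({u, x} : Set α) ∉ Indep ∧ ({u} : Set α) ∈ Indep ∧ ({x} : Set α) ∈ Indep := by
  constructor
  · rintro ⟨hdep, hmin⟩
    refine ⟨hdep, ?_, ?_⟩
    · by_contra hu
      have := hmin {u} (by intro a ha; exact Or.inl ha) hu
      have : x ∈ ({u} : Set α) := this ▸ (Or.inr rfl : x ∈ ({u, x} : Set α))
      exact hne (this.symm)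
    · by_contra hx
      have := hmin {x} (by intro a ha; exact Or.inr ha) hx
      have : u ∈ ({x} : Set α) := this ▸ (Or.inl rfl : u ∈ ({u, x} : Set α))
      exact hne this
  · rintro ⟨hdep, hu, hx⟩
    refine ⟨hdep, fun Y hY hYn => ?_⟩
    have hu' : u ∈ Y := by
      by_contra huY
      have : Y ⊆ {x} := by
        intro a ha
        rcases hY ha with rfl | rfl
        · exact absurd ha huY
        · rfl
      rcases Set.subset_singleton_iff_eq.mp this with rfl | rfl
      · exact hYn h1
      · exact hYn hx
    have hx' : x ∈ Y := by
      by_contra hxY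
      have : Y ⊆ {u} := by
        intro a ha
        rcases hY ha with rfl | rfl
        · rfl
        · exact absurd ha hxY
      rcases Set.subset_singleton_iff_eq.mp this with rfl | rfl
      · exact hYn h1
      · exact hYn hu
    apply Set.Subset.antisymm hY
    intro a ha
    rcases ha with rfl | rfl
    · exact hu'
    · exact hx'

theorem stmt_17 {α : Type*} [Fintype α] (Indep : Set (Set α))
(h1 : ∅ ∈ Indep)
    (h2 : ∀ I ∈ Indep, ∀ I' ⊆ I, I' ∈ Indep)
    (h3 : ∀ I₁ ∈ Indep, ∀ I₂ ∈ Indep, I₁.ncard < I₂.ncard →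
      ∃ u ∈ I₂ \ I₁, insert u I₁ ∈ Indep) (x : α) :
    clM Indep {x} = upper (relM Indep) {x} ∪ {y : α | ({y} : Set α) ∈ Circ Indep} := by
  ext u
  have hupper : u ∈ upper (relM Indep) {x} ↔ relM Indep u x := by
    constructor
    · rintro ⟨y, hy1, hy2⟩
      rcases hy2 with rfl
      exact hy1
    · intro h
      exact ⟨x, h, rfl⟩
  simp only [clM, Set.mem_setOf_eq, Set.mem_union, hupper]
  by_cases hux : u = x
  · subst hux
    simp only [Set.insert_eq_self.mpr (Set.mem_singleton u), relM]
    tauto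
  · rw [show insert u ({x} : Set α) = {u, x} from rfl]
    by_cases hu : ({u} : Set α) ∈ Indep
    · by_cases hx : ({x} : Set α) ∈ Indep
      · -- both singletons independent
        rw [rank_singleton_indep Indep hx]
        by_cases hp : ({u, x} : Set α) ∈ Indep
        · rw [rank_pair_indep Indep hux hp]
          simp only [relM, hux, false_or]
          rw [circ_pair_iff Indep h1 hux, circ_singleton_iff Indep h1]
          constructor
          · intro h; omega
          · rintro (⟨hd, _, _⟩ | hd) <;> [exact absurd hp hd; exact absurd hu hd]
        · rw [rank_pair_one Indep hux hp (Or.inr rfl) hx]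
          simp only [relM, hux, false_or]
          rw [circ_pair_iff Indep h1 hux]
          tauto
      · -- {x} dependent: rank {x} = 0, rank pair ≥ 1
        rw [rank_singleton_dep Indep h1 hx]
        have hp : ({u, x} : Set α) ∉ Indep := by
          intro hp
          exact hx (h2 _ hp {x} (by intro a ha; rcases ha with rfl; exact Or.inr rfl))
        rw [rank_pair_one Indep hux hp (Or.inl rfl) hu]
        simp only [relM, hux, false_or]
        rw [circ_pair_iff Indep h1 hux, circ_singleton_iff Indep h1]
        constructor
        · omega
        · rintro (⟨_, _, hxd⟩ | hd) <;> [exact absurd hxd hx; exact absurd hu hd]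
    · -- u is a loop: both sides true
      have hp : ({u, x} : Set α) ∉ Indep := by
        intro hp
        exact hu (h2 _ hp {u} (by intro a ha; rcases ha with rfl; exact Or.inl rfl))
      have hloop : ({u} : Set α) ∈ Circ Indep := (circ_singleton_iff Indep h1 u).mpr hu
      by_cases hx : ({x} : Set α) ∈ Indep
      · rw [rank_singleton_indep Indep hx, rank_pair_one Indep hux hp (Or.inr rfl) hx]
        tauto
      · rw [rank_singleton_dep Indep h1 hx, rank_pair_zero Indep h1 h2 hu hx]
        tauto
end

section
/- Let M be a matroid on a finite set U and R(M) the relation induced by M. Then for every X ⊆ U, H_{R(M)}(X) ⊆ cl_M(X). -/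
set_option linter.unusedSectionVars false
section Aux
variable {α : Type*} [Fintype α] {Indep : Set (Set α)}

/-- Augment an independent set up to the size of a bigger one. -/
lemma aug (h3 : ∀ I₁ ∈ Indep, ∀ I₂ ∈ Indep, I₁.ncard < I₂.ncard →
      ∃ u ∈ I₂ \ I₁, insert u I₁ ∈ Indep) :
    ∀ k : ℕ, ∀ I₁ ∈ Indep, ∀ I₂ ∈ Indep, I₂.ncard - I₁.ncard = k →
      I₁.ncard ≤ I₂.ncard →
      ∃ W ∈ Indep, I₁ ⊆ W ∧ W ⊆ I₁ ∪ I₂ ∧ W.ncard = I₂.ncard := by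
  intro k
  induction k with
  | zero =>
    intro I₁ h₁ I₂ h₂ hk hle
    exact ⟨I₁, h₁, subset_rfl, Set.subset_union_left, by omega⟩
  | succ k ih =>
    intro I₁ h₁ I₂ h₂ hk hle
    obtain ⟨u, hu, hins⟩ := h3 I₁ h₁ I₂ h₂ (by omega)
    have hcard : (insert u I₁).ncard = I₁.ncard + 1 :=
      Set.ncard_insert_of_notMem hu.2 (Set.toFinite _)
    obtain ⟨W, hW, hsub1, hsub2, hcardW⟩ :=
      ih (insert u I₁) hins I₂ h₂ (by omega) (by omega)
    refine ⟨W, hW, (Set.subset_insert _ _).trans hsub1, ?_, hcardW⟩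
    refine hsub2.trans ?_
    intro x hx
    rcases hx with hx | hx
    · rcases hx with rfl | hx
      · exact Or.inr hu.1
      · exact Or.inl hx
    · exact Or.inr hx

/-- If J is independent, J ⊆ S, and every independent subset of S has ncard ≤ J.ncard,
then rankM S = J.ncard. -/
lemma rank_of_max (hJ : J ∈ Indep) (hJS : J ⊆ S)
    (hmax : ∀ I ∈ Indep, I ⊆ S → I.ncard ≤ J.ncard) :
    rankM Indep S = J.ncard := by
  have hmem : J.ncard ∈ {n : ℕ | ∃ I, I ⊆ S ∧ I ∈ Indep ∧ I.ncard = n} :=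
    ⟨J, hJS, hJ, rfl⟩
  have hub : ∀ n ∈ {n : ℕ | ∃ I, I ⊆ S ∧ I ∈ Indep ∧ I.ncard = n}, n ≤ J.ncard := by
    rintro n ⟨I, hIS, hI, rfl⟩
    exact hmax I hI hIS
  exact le_antisymm (csSup_le ⟨_, hmem⟩ hub) (le_csSup ⟨J.ncard, hub⟩ hmem)

end Aux

theorem stmt_18 {α : Type*} [Fintype α] (Indep : Set (Set α))
(h1 : ∅ ∈ Indep)
    (h2 : ∀ I ∈ Indep, ∀ I' ⊆ I, I' ∈ Indep)
    (h3 : ∀ I₁ ∈ Indep, ∀ I₂ ∈ Indep, I₁.ncard < I₂.ncard →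
      ∃ u ∈ I₂ \ I₁, insert u I₁ ∈ Indep) (X : Set α) :
    upper (relM Indep) X ⊆ clM Indep X := by
  intro u hu
  obtain ⟨y, hyR, hyX⟩ := hu
  -- trivial case: u ∈ X
  by_cases huX : u ∈ X
  · show rankM Indep (insert u X) = rankM Indep X
    rw [Set.insert_eq_self.mpr huX]
  rcases hyR with rfl | hC
  · exact absurd hyX huX
  obtain ⟨hCdep, hCmin⟩ := hC
  have huy : u ≠ y := by rintro rfl; exact huX hyX
  -- {y} is independent
  have hy_indep : ({y} : Set α) ∈ Indep := by
    by_contra h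
    have := hCmin {y} (by simp) h
    have : u ∈ ({y} : Set α) := this ▸ (by simp : u ∈ ({u, y} : Set α))
    exact huy (by simpa using this)
  -- pick a maximum-size independent subset J of X
  set N := {n : ℕ | ∃ I, I ⊆ X ∧ I ∈ Indep ∧ I.ncard = n} with hN
  have hNne : N.Nonempty := ⟨0, ∅, Set.empty_subset _, h1, by simp⟩
  have hNbdd : BddAbove N := by
    refine ⟨(Set.univ : Set α).ncard, ?_⟩
    rintro n ⟨I, _, _, rfl⟩
    exact Set.ncard_le_ncard (Set.subset_univ I) (Set.toFinite _)
  obtain ⟨J, hJX, hJ, hJcard⟩ := Nat.sSup_mem hNne hNbdd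
  have hJmaxX : ∀ I ∈ Indep, I ⊆ X → I.ncard ≤ J.ncard := by
    intro I hI hIX
    have : I.ncard ∈ N := ⟨I, hIX, hI, rfl⟩
    rw [hJcard]; exact le_csSup hNbdd this
  have huJ : u ∉ J := fun h => huX (hJX h)
  -- insert u J is dependent
  have hins_dep : insert u J ∉ Indep := by
    by_cases hyJ : y ∈ J
    · intro h
      exact hCdep (h2 _ h {u, y} (by
        rintro z (rfl | rfl)
        · exact Set.mem_insert _ _
        · exact Set.mem_insert_of_mem _ hyJ))
    · intro h
      have hcard1 : ({y} : Set α).ncard = 1 := Set.ncard_singleton y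
      have hcard2 : (insert u J).ncard = J.ncard + 1 :=
        Set.ncard_insert_of_notMem huJ (Set.toFinite _)
      obtain ⟨W, hW, hyW, hWsub, hWcard⟩ :=
        aug h3 ((insert u J).ncard - ({y} : Set α).ncard) {y} hy_indep
          (insert u J) h rfl (by omega)
      have huW : u ∉ W := by
        intro huW'
        refine hCdep (h2 _ hW {u, y} ?_)
        rintro z (rfl | rfl)
        · exact huW'
        · exact hyW rfl
      have hWX : W ⊆ X := by
        intro z hz
        rcases hWsub hz with hz' | hz'
        · have : z = y := hz'
          exact this ▸ hyX
        · rcases hz' with rfl | hz''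
          · exact absurd hz huW
          · exact hJX hz''
      have := hJmaxX W hW hWX
      omega
  -- J is also maximum in insert u X
  have hJmax' : ∀ I ∈ Indep, I ⊆ insert u X → I.ncard ≤ J.ncard := by
    intro I hI hIS
    by_contra hlt
    obtain ⟨x, hx, hxins⟩ := h3 J hJ I hI (by omega)
    rcases hIS hx.1 with rfl | hxX
    · exact hins_dep hxins
    · have : (insert x J).ncard = J.ncard + 1 :=
        Set.ncard_insert_of_notMem hx.2 (Set.toFinite _)
      have := hJmaxX (insert x J) hxins (Set.insert_subset hxX hJX)
      omega
  show rankM Indep (insert u X) = rankM Indep X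
  rw [rank_of_max hJ (hJX.trans (Set.subset_insert _ _)) hJmax',
    rank_of_max hJ hJX hJmaxX]
end

section
/- Let R be a binary relation on a finite set U, M(R) the successor relation matroid induced by R, and R(M(R)) the relation induced by M(R) via circuits. Then R(M(R)) = {(x,y) ∈ U × U : RS_R(x) = RS_R(y)}. Moreover, if R is reflexive then R(M(R)) ⊆ R, and R(M(R)) = R if and only if R is an equivalence relation. -/
lemma key_relM {α : Type*} (R : α → α → Prop) (x y : α) :
    relM (IndepS R) x y ↔ RS R x = RS R y := by
  constructor
  · rintro (rfl | ⟨hC, _⟩)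
    · rfl
    · by_contra hne
      apply hC
      intro a ha b hb hab
      rcases ha with rfl | rfl <;> rcases hb with rfl | rfl <;> simp_all
      exact fun h => hne h.symm
  · intro h
    by_cases hxy : x = y
    · exact Or.inl hxy
    · refine Or.inr ⟨fun hI => hI x (Or.inl rfl) y (Or.inr rfl) hxy h, ?_⟩
      intro Y hY hYnot
      simp only [IndepS, Set.mem_setOf_eq, not_forall] at hYnot
      obtain ⟨a, ha, b, hb, hab, heq⟩ := hYnot
      have heq' : RS R a = RS R b := not_not.mp heq
      apply Set.Subset.antisymm hY
      rcases hY ha with rfl | rfl <;> rcases hY hb with rfl | rfl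
      · exact absurd rfl hab
      · intro z hz; rcases hz with rfl | rfl; exacts [ha, hb]
      · intro z hz; rcases hz with rfl | rfl; exacts [hb, ha]
      · exact absurd rfl hab

theorem stmt_19 {α : Type*} [Fintype α] (R : α → α → Prop) :
    (∀ x y : α, relM (IndepS R) x y ↔ RS R x = RS R y) ∧
    (Reflexive R → ∀ x y : α, relM (IndepS R) x y → R x y) ∧
    ((∀ x y : α, relM (IndepS R) x y ↔ R x y) ↔ Equivalence R) := by
  refine ⟨key_relM R, ?_, ?_⟩
  · intro hrefl x y h
    have := (key_relM R x y).mp h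
    have hy : y ∈ RS R y := hrefl y
    rw [← this] at hy
    exact hy
  · constructor
    · intro h
      have h' : ∀ x y, R x y ↔ RS R x = RS R y := fun x y =>
        (h x y).symm.trans (key_relM R x y)
      refine ⟨fun x => (h' x x).mpr rfl, ?_, ?_⟩
      · intro x y hxy; exact (h' y x).mpr ((h' x y).mp hxy).symm
      · intro x y z hxy hyz
        exact (h' x z).mpr (((h' x y).mp hxy).trans ((h' y z).mp hyz))
    · intro hE x y
      rw [key_relM R x y]
      constructor
      · intro h
        have : y ∈ RS R y := hE.refl y
        rw [← h] at this; exact this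
      · intro h
        ext z
        exact ⟨fun hz => hE.trans (hE.symm h) hz, fun hz => hE.trans h hz⟩
end
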